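/- arXiv:2204.10051 — 2 statements merged into one kernel-verified Lean document; each statement's English description precedes it below -/
import Mathlib

section
/- Suppose x satisfies the regularity assumption. Then for every real n > 1 and every ξ ∈ ℝ, the series σ^{(n)}(ξ,a) = a ∑_{k=1}^∞ G_n(ka;ξ) converges absolutely for each a > 0, and lim_{a→0⁺} a^{n−1} σ^{(n)}(ξ,a) = −(n+1) ζ(n) x''(ξ) x'(ξ)^{−(n+2)}. -/
/-!
Write `x (ξ ± h) - x ξ = ± h · D (ξ ± h)` with `D = dslope x ξ`, which the mean value theorem
bounds below by `p₀`. Then `h ^ n · G_n(h) = (F (ξ + h) - F (ξ - h)) / h` with `F = D ^ (-(n+1))`,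
a symmetric difference quotient, so it tends to `2 F'(ξ) = -(n+1) x''(ξ) x'(ξ) ^ (-(n+2))`, using
`D'(ξ) = x''(ξ) / 2` for analytic `x`. The same representation gives
`|h ^ n · G_n(h)| ≤ p₀ ^ (-(n+1)) / h`, so `h ^ n · G_n(h)` is bounded on `h > 0`, and
`a ^ (n-1) σ(a) = ∑ (k+1) ^ (-n) · ((k+1) a) ^ n G_n((k+1) a)` converges to `ζ(n)` times that limit
by dominated convergence.
-/

open Real Filter Topology MeasureTheory

/-- The real value of the Riemann zeta function (analytically continued). -/
noncomputable def zetaR (s : ℝ) : ℝ := (riemannZeta (s : ℂ)).re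

/-- `G_s(h; ξ) = (x(ξ+h) - x(ξ))^{-(s+1)} - (x(ξ) - x(ξ-h))^{-(s+1)}`. -/
noncomputable def Gfun (x : ℝ → ℝ) (s ξ h : ℝ) : ℝ :=
  (x (ξ + h) - x ξ) ^ (-(s + 1)) - (x ξ - x (ξ - h)) ^ (-(s + 1))

/-- `σ^{(s)}(ξ, a) = a ∑_{k=1}^∞ G_s(k a; ξ)`. -/
noncomputable def sigmaFun (x : ℝ → ℝ) (s ξ a : ℝ) : ℝ :=
  a * ∑' k : ℕ, Gfun x s ξ (((k : ℝ) + 1) * a)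

/-- The regularity assumption on the vicinal surface `x`:
real analyticity, globally converging Taylor expansions, and `inf x' > 0`. -/
def RegularSurface (x : ℝ → ℝ) : Prop :=
  (∀ ξ : ℝ, AnalyticAt ℝ x ξ) ∧
  (∀ ξ h : ℝ,
    HasSum (fun j : ℕ => iteratedDeriv j x ξ / (Nat.factorial j : ℝ) * h ^ j) (x (ξ + h))) ∧
  (∃ p₀ : ℝ, 0 < p₀ ∧ ∀ h : ℝ, p₀ ≤ deriv x h)

theorem AnalyticAt.hasDerivAt_dslope {𝕜 : Type*} [NontriviallyNormedField 𝕜] [CompleteSpace 𝕜]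
    [CharZero 𝕜] {f : 𝕜 → 𝕜} {a : 𝕜} (hf : AnalyticAt 𝕜 f a) :
    HasDerivAt (dslope f a) (deriv (deriv f) a / 2) a := by
  set p := FormalMultilinearSeries.ofScalars 𝕜 fun n => iteratedDeriv n f a / n.factorial
  have hcoeff : (p.fslope 1 fun _ => 1) = deriv (deriv f) a / 2 := by
    change p.fslope.coeff 1 = _
    rw [FormalMultilinearSeries.coeff_fslope, FormalMultilinearSeries.coeff_ofScalars,
      iteratedDeriv_succ, iteratedDeriv_one]
    norm_num
  exact hcoeff ▸ hf.hasFPowerSeriesAt.has_fpower_series_dslope_fslope.hasDerivAt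

theorem HasDerivAt.tendsto_sub_div_nhdsGT {f : ℝ → ℝ} {f' a : ℝ} (hf : HasDerivAt f f' a) :
    Tendsto (fun h => (f (a + h) - f (a - h)) / h) (𝓝[>] 0) (𝓝 (2 * f')) := by
  have hneg : Tendsto Neg.neg (𝓝[>] (0 : ℝ)) (𝓝[<] 0) := by
    simpa using tendsto_neg_nhdsGT_neg (a := (0 : ℝ))
  rw [two_mul]
  refine (hf.tendsto_slope_zero_right.add (hf.tendsto_slope_zero_left.comp hneg)).congr' ?_
  filter_upwards [self_mem_nhdsWithin] with h (hh : 0 < h)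
  simp only [Function.comp_apply, smul_eq_mul, ← sub_eq_add_neg, inv_neg]
  field_simp
  ring

theorem le_dslope_of_forall_le_deriv {f : ℝ → ℝ} {C : ℝ} (hf : Differentiable ℝ f)
    (hC : ∀ t, C ≤ deriv f t) (a b : ℝ) : C ≤ dslope f a b := by
  rcases lt_trichotomy a b with hab | rfl | hab
  · rw [dslope_of_ne _ hab.ne', slope_def_field, le_div_iff₀ (sub_pos.mpr hab)]
    exact mul_sub_le_image_sub_of_le_deriv hf hC hab.le
  · rw [dslope_same]
    exact hC a
  · rw [dslope_of_ne _ hab.ne, slope_comm, slope_def_field, le_div_iff₀ (sub_pos.mpr hab)]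
    exact mul_sub_le_image_sub_of_le_deriv hf hC hab.le

theorem RegularSurface.exists_forall_le_dslope {x : ℝ → ℝ} (hx : RegularSurface x) :
    ∃ p₀ > 0, ∀ ξ t, p₀ ≤ dslope x ξ t := by
  obtain ⟨hxan, -, p₀, hp₀, hp₀le⟩ := hx
  exact ⟨p₀, hp₀, le_dslope_of_forall_le_deriv (fun t => (hxan t).differentiableAt) hp₀le⟩

theorem summable_nat_add_one_rpow {e : ℝ} (he : e < -1) :
    Summable fun k : ℕ => ((k : ℝ) + 1) ^ e := by
  exact_mod_cast (summable_nat_add_iff 1).mpr (Real.summable_nat_rpow.mpr he)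

theorem zetaR_eq_tsum {s : ℝ} (hs : 1 < s) : zetaR s = ∑' k : ℕ, ((k : ℝ) + 1) ^ (-s) := by
  have hterm : ∀ k : ℕ, (1 : ℂ) / ((k : ℂ) + 1) ^ (s : ℂ) = ((((k : ℝ) + 1) ^ (-s) : ℝ) : ℂ) := by
    intro k
    have hk : (0 : ℝ) ≤ (k : ℝ) + 1 := by positivity
    rw [Real.rpow_neg hk, Complex.ofReal_inv, Complex.ofReal_cpow hk, one_div]
    push_cast
    rfl
  rw [zetaR, zeta_eq_tsum_one_div_nat_add_one_cpow (by simpa using hs)]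
  simp only [hterm]
  rw [← Complex.ofReal_tsum, Complex.ofReal_re]

theorem tendsto_tsum_nat_add_one_rpow_mul_comp {g : ℝ → ℝ} {L M s : ℝ} (hs : 1 < s)
    (hg : Tendsto g (𝓝[>] 0) (𝓝 L)) (hM : ∀ h, 0 < h → |g h| ≤ M) :
    Tendsto (fun a => ∑' k : ℕ, ((k : ℝ) + 1) ^ (-s) * g (((k : ℝ) + 1) * a)) (𝓝[>] 0)
      (𝓝 (∑' k : ℕ, ((k : ℝ) + 1) ^ (-s) * L)) := by
  refine tendsto_tsum_of_dominated_convergence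
    ((summable_nat_add_one_rpow (by linarith : -s < -1)).mul_right M) (fun k => ?_) ?_
  · have hk : (0 : ℝ) < (k : ℝ) + 1 := by positivity
    have hscale : Tendsto (fun a : ℝ => ((k : ℝ) + 1) * a) (𝓝[>] 0) (𝓝[>] 0) := by
      simpa using Filter.TendstoNhdsWithinIoi.const_mul hk (tendsto_id (x := 𝓝[>] (0 : ℝ)))
    exact (hg.comp hscale).const_mul _
  · filter_upwards [self_mem_nhdsWithin] with a (ha : 0 < a) k
    have hk : (0 : ℝ) < (k : ℝ) + 1 := by positivity
    rw [norm_mul, Real.norm_of_nonneg (rpow_nonneg hk.le _)]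
    exact mul_le_mul_of_nonneg_left (hM _ (mul_pos hk ha)) (rpow_nonneg hk.le _)

theorem exists_forall_abs_le_of_tendsto_nhdsGT {g : ℝ → ℝ} {L C : ℝ}
    (hg : Tendsto g (𝓝[>] 0) (𝓝 L)) (hC : ∀ h, 0 < h → |g h| ≤ C / h) :
    ∃ M, ∀ h, 0 < h → |g h| ≤ M := by
  obtain ⟨δ, hδ, hnear⟩ := mem_nhdsGT_iff_exists_Ioo_subset.mp <|
    hg.abs.eventually_lt_const (lt_add_one |L|)
  have hC0 : 0 ≤ C := by simpa using (abs_nonneg _).trans (hC 1 one_pos)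
  refine ⟨max (|L| + 1) (C / δ), fun h hh => ?_⟩
  rcases lt_or_ge h δ with hlt | hge
  · exact (hnear ⟨hh, hlt⟩).le.trans (le_max_left _ _)
  · exact (hC h hh).trans <| (div_le_div_of_nonneg_left hC0 hδ hge).trans (le_max_right _ _)

section Gfun

variable {x : ℝ → ℝ} {s ξ p₀ h : ℝ}

theorem Gfun_eq_rpow_mul_sub (hd : ∀ t, 0 ≤ dslope x ξ t) (hh : 0 < h) :
    Gfun x s ξ h =
      h ^ (-(s + 1)) * (dslope x ξ (ξ + h) ^ (-(s + 1)) - dslope x ξ (ξ - h) ^ (-(s + 1))) := by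
  have hright : x (ξ + h) - x ξ = h * dslope x ξ (ξ + h) := by
    simpa using (sub_smul_dslope x ξ (ξ + h)).symm
  have hleft : x ξ - x (ξ - h) = h * dslope x ξ (ξ - h) := by
    have := sub_smul_dslope x ξ (ξ - h)
    simp only [sub_sub_cancel_left, smul_eq_mul, neg_mul] at this
    linarith
  rw [Gfun, hright, hleft, mul_rpow hh.le (hd _), mul_rpow hh.le (hd _), mul_sub]

theorem abs_Gfun_le (hs : -1 ≤ s) (hp₀ : 0 < p₀) (hd : ∀ t, p₀ ≤ dslope x ξ t) (hh : 0 < h) :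
    |Gfun x s ξ h| ≤ h ^ (-(s + 1)) * p₀ ^ (-(s + 1)) := by
  have hd0 : ∀ t, 0 ≤ dslope x ξ t := fun t => hp₀.le.trans (hd t)
  have hle : ∀ t, dslope x ξ t ^ (-(s + 1)) ≤ p₀ ^ (-(s + 1)) := fun t =>
    rpow_le_rpow_of_nonpos hp₀ (hd t) (by linarith)
  rw [Gfun_eq_rpow_mul_sub hd0 hh, abs_mul, abs_of_nonneg (rpow_nonneg hh.le _)]
  exact mul_le_mul_of_nonneg_left (abs_sub_le_of_nonneg_of_le (rpow_nonneg (hd0 _) _) (hle _)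
    (rpow_nonneg (hd0 _) _) (hle _)) (rpow_nonneg hh.le _)

theorem abs_rpow_mul_Gfun_le (hs : -1 ≤ s) (hp₀ : 0 < p₀) (hd : ∀ t, p₀ ≤ dslope x ξ t)
    (hh : 0 < h) : |h ^ s * Gfun x s ξ h| ≤ p₀ ^ (-(s + 1)) / h := by
  rw [abs_mul, abs_of_nonneg (rpow_nonneg hh.le _)]
  calc h ^ s * |Gfun x s ξ h| ≤ h ^ s * (h ^ (-(s + 1)) * p₀ ^ (-(s + 1))) :=
        mul_le_mul_of_nonneg_left (abs_Gfun_le hs hp₀ hd hh) (rpow_nonneg hh.le _)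
    _ = p₀ ^ (-(s + 1)) / h := by
        rw [← mul_assoc, ← rpow_add hh, show s + -(s + 1) = -1 by ring, rpow_neg_one]
        ring

theorem summable_abs_Gfun (hs : 0 < s) (hp₀ : 0 < p₀) (hd : ∀ t, p₀ ≤ dslope x ξ t) {a : ℝ}
    (ha : 0 < a) : Summable fun k : ℕ => |Gfun x s ξ (((k : ℝ) + 1) * a)| := by
  refine .of_nonneg_of_le (fun k => abs_nonneg _) (fun k => ?_)
    ((summable_nat_add_one_rpow (by linarith : -(s + 1) < -1)).mul_right
      (a ^ (-(s + 1)) * p₀ ^ (-(s + 1))))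
  have hk : (0 : ℝ) < (k : ℝ) + 1 := by positivity
  calc |Gfun x s ξ (((k : ℝ) + 1) * a)| ≤ (((k : ℝ) + 1) * a) ^ (-(s + 1)) * p₀ ^ (-(s + 1)) :=
        abs_Gfun_le (by linarith) hp₀ hd (mul_pos hk ha)
    _ = ((k : ℝ) + 1) ^ (-(s + 1)) * (a ^ (-(s + 1)) * p₀ ^ (-(s + 1))) := by
        rw [mul_rpow hk.le ha.le, mul_assoc]

theorem tendsto_rpow_mul_Gfun (hx : AnalyticAt ℝ x ξ) (hd : ∀ t, 0 < dslope x ξ t) :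
    Tendsto (fun h => h ^ s * Gfun x s ξ h) (𝓝[>] 0)
      (𝓝 (-(s + 1) * deriv (deriv x) ξ * deriv x ξ ^ (-(s + 2)))) := by
  have hF := hx.hasDerivAt_dslope.rpow_const (p := -(s + 1)) (Or.inl (hd ξ).ne')
  rw [dslope_same, show -(s + 1) - 1 = -(s + 2) by ring] at hF
  convert hF.tendsto_sub_div_nhdsGT.congr' ?_ using 2
  · ring
  · filter_upwards [self_mem_nhdsWithin] with h (hh : 0 < h)
    rw [Gfun_eq_rpow_mul_sub (fun t => (hd t).le) hh, ← mul_assoc, ← rpow_add hh,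
      show s + -(s + 1) = -1 by ring, rpow_neg_one, inv_mul_eq_div]

theorem rpow_sub_one_mul_sigmaFun {a : ℝ} (ha : 0 < a) :
    a ^ (s - 1) * sigmaFun x s ξ a =
      ∑' k : ℕ, ((k : ℝ) + 1) ^ (-s) *
        ((((k : ℝ) + 1) * a) ^ s * Gfun x s ξ (((k : ℝ) + 1) * a)) := by
  rw [sigmaFun, ← mul_assoc, ← rpow_add_one ha.ne', sub_add_cancel, ← tsum_mul_left]
  congr 1 with k
  have hk : (0 : ℝ) < (k : ℝ) + 1 := by positivity
  rw [mul_rpow hk.le ha.le, ← mul_assoc, ← mul_assoc, ← rpow_add hk, neg_add_cancel, rpow_zero,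
    one_mul]

end Gfun

theorem stmt_0 (x : ℝ → ℝ) (hx : RegularSurface x) (n : ℝ) (hn : 1 < n) (ξ : ℝ) :
    (∀ a : ℝ, 0 < a → Summable (fun k : ℕ => |Gfun x n ξ (((k : ℝ) + 1) * a)|)) ∧
    Tendsto (fun a : ℝ => a ^ (n - 1) * sigmaFun x n ξ a) (𝓝[>] (0 : ℝ))
      (𝓝 (-(n + 1) * zetaR n * deriv (deriv x) ξ * (deriv x ξ) ^ (-(n + 2)))) := by
  obtain ⟨p₀, hp₀, hd⟩ := hx.exists_forall_le_dslope
  have hlim := tendsto_rpow_mul_Gfun (s := n) (hx.1 ξ) fun t => hp₀.trans_le (hd ξ t)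
  obtain ⟨M, hM⟩ := exists_forall_abs_le_of_tendsto_nhdsGT hlim fun h hh =>
    abs_rpow_mul_Gfun_le (by linarith) hp₀ (hd ξ) hh
  refine ⟨fun a ha => summable_abs_Gfun (by linarith) hp₀ (hd ξ) ha, ?_⟩
  have hsum := tendsto_tsum_nat_add_one_rpow_mul_comp hn hlim hM
  rw [tsum_mul_right, ← zetaR_eq_tsum hn] at hsum
  convert hsum.congr' ?_ using 2
  · ring
  · filter_upwards [self_mem_nhdsWithin] with a (ha : 0 < a)
    exact (rpow_sub_one_mul_sigmaFun ha).symm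
end

section
/- Let −1 < m < 1. Then: (i) for every w ∈ (0,1) the series defining D_m(w) converges absolutely, and D_m(w) > 0 for all w ∈ (0,1/2); (ii) the function K_m is nonnegative, even, 1-periodic, and strictly decreasing on (0,1/2), and satisfies K_m(z) = K_m(1−z) for z ∈ (0,1); (iii) K_m is integrable on Ω, i.e. K_m ∈ L¹(Ω); (iv) if in addition −1 < m ≤ 0, then K_m ∈ L²(Ω). -/
open Real Filter Topology MeasureTheory

/-- The periodic cell `Ω = [-1/2, 1/2]`. -/
noncomputable def Omega : Set ℝ := Set.Icc (-(1/2) : ℝ) (1/2)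

/-- `D_m(w) = ∑_{k=0}^∞ [(k+w)^{-(m+1)} - (k+1-w)^{-(m+1)}]` for `w ∈ (0,1)`,
extended `1`-periodically (via the fractional part). -/
noncomputable def Dm (m w : ℝ) : ℝ :=
  ∑' k : ℕ, (((k : ℝ) + Int.fract w) ^ (-(m + 1)) - ((k : ℝ) + 1 - Int.fract w) ^ (-(m + 1)))

/-- `K_m(z) = ∫_z^{1/2} D_m(w) dw` for `z ∈ (0,1/2]`, extended to an even
`1`-periodic function on `ℝ` (here `|z - round z|` is the distance of `z` to `ℤ`). -/
noncomputable def Km (m z : ℝ) : ℝ :=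
  ∫ w in Set.Ioc (|z - (round z : ℝ)|) (1/2 : ℝ), Dm m w

/-!
For `0 < w ≤ 1/2` every summand of `D_m(w)` is nonnegative because `t ↦ t ^ (-(m+1))` decreases,
and from `k = 1` on it is dominated by the telescoping term `k ^ (-(m+1)) - (k+1) ^ (-(m+1))`.
So the series converges absolutely and `0 < D_m(w) ≤ w ^ (-(m+1)) + 1`; `K_m` integrates a positive
function, hence is nonnegative and strictly decreasing on `(0, 1/2)`. Since `|z - round z|` is the
norm of `z` in `ℝ/ℤ`, evenness and periodicity are those of the norm. Finally, splitting
`w ^ (-(m+1)) = w ^ r * w ^ (-(m+1) - r)` with `r ≤ 0`, `r < -m` gives `K_m(z) ≤ C |z| ^ r + 1/2`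
on `Ω`, which is in `L^q` once `r q > -1`; such an `r` exists exactly when `m q < 1`.
-/

open Set
open scoped NNReal

noncomputable def dmTerm (p w : ℝ) (k : ℕ) : ℝ := ((k : ℝ) + w) ^ p - ((k : ℝ) + 1 - w) ^ p

section Series

variable {p w : ℝ}

lemma sum_range_rpow_sub_rpow_le_one (n : ℕ) :
    ∑ k ∈ Finset.range n, (((k : ℝ) + 1) ^ p - ((k : ℝ) + 2) ^ p) ≤ 1 := by
  have h := Finset.sum_range_sub' (fun k : ℕ => ((k : ℝ) + 1) ^ p) n
  push_cast at h
  simp only [add_assoc, one_add_one_eq_two, zero_add, Real.one_rpow] at h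
  rw [h]
  linarith [rpow_nonneg (by positivity : (0 : ℝ) ≤ n + 1) p]

lemma rpow_sub_rpow_succ_nonneg (hp : p ≤ 0) (k : ℕ) :
    0 ≤ ((k : ℝ) + 1) ^ p - ((k : ℝ) + 2) ^ p :=
  sub_nonneg.2 (rpow_le_rpow_of_nonpos (by positivity) (by linarith) hp)

lemma summable_rpow_sub_rpow_succ (hp : p ≤ 0) :
    Summable fun k : ℕ => ((k : ℝ) + 1) ^ p - ((k : ℝ) + 2) ^ p :=
  summable_of_sum_range_le (rpow_sub_rpow_succ_nonneg hp) sum_range_rpow_sub_rpow_le_one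

lemma tsum_rpow_sub_rpow_succ_le_one (hp : p ≤ 0) :
    ∑' k : ℕ, (((k : ℝ) + 1) ^ p - ((k : ℝ) + 2) ^ p) ≤ 1 :=
  Real.tsum_le_of_sum_range_le (rpow_sub_rpow_succ_nonneg hp) sum_range_rpow_sub_rpow_le_one

lemma abs_dmTerm_succ_le (hp : p ≤ 0) (hw : w ∈ Icc (0 : ℝ) 1) (k : ℕ) :
    |dmTerm p w (k + 1)| ≤ ((k : ℝ) + 1) ^ p - ((k : ℝ) + 2) ^ p := by
  obtain ⟨hw0, hw1⟩ := hw
  have anti : ∀ {x y : ℝ}, (k : ℝ) + 1 ≤ x → x ≤ y → y ^ p ≤ x ^ p := fun hx hxy =>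
    rpow_le_rpow_of_nonpos (by linarith [(k.cast_nonneg : (0 : ℝ) ≤ k)]) hxy hp
  simp only [dmTerm, Nat.cast_add, Nat.cast_one]
  rw [abs_sub_le_iff]
  constructor <;>
  linarith [anti (x := (k : ℝ) + 1) le_rfl (by linarith : (k : ℝ) + 1 ≤ k + 1 + w),
    anti (x := (k : ℝ) + 1) le_rfl (by linarith : (k : ℝ) + 1 ≤ k + 1 + 1 - w),
    anti (by linarith : (k : ℝ) + 1 ≤ k + 1 + w) (by linarith : (k : ℝ) + 1 + w ≤ k + 2),
    anti (by linarith : (k : ℝ) + 1 ≤ k + 1 + 1 - w) (by linarith : (k : ℝ) + 1 + 1 - w ≤ k + 2)]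

lemma summable_abs_dmTerm (hp : p ≤ 0) (hw : w ∈ Icc (0 : ℝ) 1) :
    Summable fun k => |dmTerm p w k| :=
  (summable_nat_add_iff 1).1 <| (summable_rpow_sub_rpow_succ hp).of_nonneg_of_le
    (fun _ => abs_nonneg _) (abs_dmTerm_succ_le hp hw)

lemma dmTerm_nonneg (hp : p ≤ 0) (hw0 : 0 < w) (hw1 : w ≤ 1/2) (k : ℕ) : 0 ≤ dmTerm p w k :=
  sub_nonneg.2 (rpow_le_rpow_of_nonpos (by positivity) (by linarith) hp)

lemma tsum_dmTerm_pos (hp : p < 0) (hw0 : 0 < w) (hw1 : w < 1/2) : 0 < ∑' k, dmTerm p w k := by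
  refine (summable_abs_dmTerm hp.le ⟨hw0.le, by linarith⟩).of_abs.tsum_pos
    (dmTerm_nonneg hp.le hw0 hw1.le) 0 ?_
  simpa [dmTerm] using rpow_lt_rpow_of_neg hw0 (by linarith) hp

lemma tsum_dmTerm_le (hp : p ≤ 0) (hw : w ∈ Icc (0 : ℝ) 1) : ∑' k, dmTerm p w k ≤ w ^ p + 1 := by
  have hs := summable_abs_dmTerm hp hw
  have head : dmTerm p w 0 ≤ w ^ p := by
    simpa [dmTerm] using rpow_nonneg (by linarith [hw.2] : (0 : ℝ) ≤ 1 - w) p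
  have tail : ∑' k, dmTerm p w (k + 1) ≤ 1 :=
    calc ∑' k, dmTerm p w (k + 1) ≤ ∑' k : ℕ, (((k : ℝ) + 1) ^ p - ((k : ℝ) + 2) ^ p) :=
          hs.of_abs.comp_injective (add_left_injective 1) |>.tsum_le_tsum
            (fun k => (le_abs_self _).trans (abs_dmTerm_succ_le hp hw k))
            (summable_rpow_sub_rpow_succ hp)
      _ ≤ 1 := tsum_rpow_sub_rpow_succ_le_one hp
  rw [hs.of_abs.tsum_eq_zero_add]
  linarith

end Series

section Kernel

variable {m : ℝ}

lemma Dm_eq_tsum_dmTerm {w : ℝ} (hw : w ∈ Ico (0 : ℝ) 1) :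
    Dm m w = ∑' k, dmTerm (-(m + 1)) w k := by
  rw [Dm, Int.fract_eq_self.2 hw]; rfl

lemma Dm_pos (hm : -1 < m) {w : ℝ} (hw0 : 0 < w) (hw1 : w < 1/2) : 0 < Dm m w := by
  rw [Dm_eq_tsum_dmTerm ⟨hw0.le, by linarith⟩]
  exact tsum_dmTerm_pos (by linarith) hw0 hw1

lemma Dm_nonneg (hm : -1 < m) {w : ℝ} (hw0 : 0 < w) (hw1 : w ≤ 1/2) : 0 ≤ Dm m w := by
  rw [Dm_eq_tsum_dmTerm ⟨hw0.le, by linarith⟩]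
  exact tsum_nonneg (dmTerm_nonneg (by linarith) hw0 hw1)

lemma Dm_le (hm : -1 < m) {w : ℝ} (hw0 : 0 ≤ w) (hw1 : w ≤ 1/2) :
    Dm m w ≤ w ^ (-(m + 1)) + 1 := by
  rw [Dm_eq_tsum_dmTerm ⟨hw0, by linarith⟩]
  exact tsum_dmTerm_le (by linarith) ⟨hw0, by linarith⟩

lemma measurable_Dm : Measurable (Dm m) :=
  Measurable.tsum fun _ => by fun_prop

lemma integrableOn_Dm (hm : -1 < m) {a : ℝ} (ha : 0 < a) : IntegrableOn (Dm m) (Ioc a (1/2)) := by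
  refine Measure.integrableOn_of_bounded (M := a ^ (-(m + 1)) + 1) measure_Ioc_lt_top.ne
    measurable_Dm.aestronglyMeasurable ?_
  filter_upwards [ae_restrict_mem measurableSet_Ioc] with w ⟨haw, hw⟩
  rw [Real.norm_eq_abs, abs_of_nonneg (Dm_nonneg hm (ha.trans haw) hw)]
  linarith [Dm_le hm (ha.trans haw).le hw,
    rpow_le_rpow_of_nonpos ha haw.le (by linarith : -(m + 1) ≤ 0)]

lemma intervalIntegrable_Dm (hm : -1 < m) {a b : ℝ} (ha : 0 < a) (hab : a ≤ b) (hb : b ≤ 1/2) :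
    IntervalIntegrable (Dm m) volume a b :=
  (intervalIntegrable_iff_integrableOn_Ioc_of_le hab).2
    ((integrableOn_Dm hm ha).mono_set (Ioc_subset_Ioc_right hb))

end Kernel

lemma stronglyMeasurable_setIntegral_Ioc {α : Type*} [MeasurableSpace α] {a : α → ℝ} {f : ℝ → ℝ}
    (ha : Measurable a) (hf : Measurable f) (b : ℝ) :
    StronglyMeasurable fun x => ∫ w in Ioc (a x) b, f w := by
  have hS : MeasurableSet {q : α × ℝ | q.2 ∈ Ioc (a q.1) b} :=
    (measurableSet_lt (ha.comp measurable_fst) measurable_snd).inter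
      (measurableSet_le measurable_snd measurable_const)
  simp_rw [← integral_indicator measurableSet_Ioc]
  exact StronglyMeasurable.integral_prod_right'
    (f := fun q : α × ℝ => (Ioc (a q.1) b).indicator f q.2)
    ((hf.comp measurable_snd).indicator hS).stronglyMeasurable

lemma norm_coe_unitAddCircle_of_abs_le {z : ℝ} (hz : |z| ≤ 1/2) : ‖(z : UnitAddCircle)‖ = |z| :=
  (AddCircle.norm_coe_eq_abs_iff _ one_ne_zero).2 (by simpa using hz)

lemma norm_unitAddCircle_le_half (x : UnitAddCircle) : ‖x‖ ≤ 1/2 := by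
  simpa using AddCircle.norm_le_half_period (p := (1 : ℝ)) one_ne_zero (x := x)

lemma intervalIntegrable_abs_rpow {s : ℝ} (hs : -1 < s) (a b : ℝ) :
    IntervalIntegrable (fun x : ℝ => |x| ^ s) volume a b := by
  have of_nonneg : ∀ c : ℝ, 0 ≤ c → IntervalIntegrable (fun x : ℝ => |x| ^ s) volume 0 c :=
    fun c hc => (intervalIntegral.intervalIntegrable_rpow' hs).congr fun x hx => by
      rw [uIoc_of_le hc] at hx
      rw [abs_of_pos hx.1]
  have from_zero : ∀ c : ℝ, IntervalIntegrable (fun x : ℝ => |x| ^ s) volume 0 c := fun c => by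
    rcases le_total 0 c with hc | hc
    · exact of_nonneg c hc
    · simpa using (IntervalIntegrable.iff_comp_neg (by finiteness)).1
        (of_nonneg (-c) (by linarith))
  exact (from_zero a).symm.trans (from_zero b)

lemma memLp_abs_rpow_Omega {r : ℝ} {q : ℝ≥0} (hq : q ≠ 0) (hrq : -1 < r * q) :
    MemLp (fun z : ℝ => |z| ^ r) q (volume.restrict Omega) := by
  have hmeas : Measurable fun z : ℝ => |z| ^ r := by fun_prop
  refine (integrable_norm_rpow_iff hmeas.aestronglyMeasurable (by exact_mod_cast hq)
    ENNReal.coe_ne_top).1 ?_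
  have : IntegrableOn (fun z : ℝ => |z| ^ (r * q)) Omega :=
    (intervalIntegrable_iff_integrableOn_Icc_of_le (by norm_num)).1
      (intervalIntegrable_abs_rpow hrq _ _)
  refine this.congr_fun (fun z _ => ?_) measurableSet_Icc
  simp [abs_of_nonneg (rpow_nonneg (abs_nonneg z) r), ← rpow_mul (abs_nonneg z)]

instance : IsFiniteMeasure (volume.restrict Omega) := by
  unfold Omega; infer_instance

section Potential

variable {m : ℝ}

lemma Km_eq (z : ℝ) : Km m z = ∫ w in Ioc ‖(z : UnitAddCircle)‖ (1/2), Dm m w := by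
  rw [Km, UnitAddCircle.norm_eq]

lemma Km_neg (z : ℝ) : Km m (-z) = Km m z := by
  rw [Km_eq, Km_eq, AddCircle.coe_neg, norm_neg]

lemma Km_add_one (z : ℝ) : Km m (z + 1) = Km m z := by
  rw [Km_eq, Km_eq, AddCircle.coe_add_period]

lemma Km_one_sub (z : ℝ) : Km m (1 - z) = Km m z := by
  rw [sub_eq_neg_add, Km_add_one, Km_neg]

lemma Km_eq_intervalIntegral {z : ℝ} (h0 : 0 ≤ z) (h1 : z ≤ 1/2) :
    Km m z = ∫ w in z..1/2, Dm m w := by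
  rw [Km_eq, norm_coe_unitAddCircle_of_abs_le (by rwa [abs_of_nonneg h0]), abs_of_nonneg h0,
    intervalIntegral.integral_of_le h1]

lemma Km_nonneg (hm : -1 < m) (z : ℝ) : 0 ≤ Km m z := by
  rw [Km_eq]
  exact setIntegral_nonneg measurableSet_Ioc fun w hw =>
    Dm_nonneg hm ((norm_nonneg _).trans_lt hw.1) hw.2

lemma strictAntiOn_Km (hm : -1 < m) : StrictAntiOn (Km m) (Ioo 0 (1/2)) := by
  intro z₁ h₁ z₂ h₂ h₁₂
  have hpos : 0 < ∫ w in z₁..z₂, Dm m w :=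
    intervalIntegral.intervalIntegral_pos_of_pos_on
      (intervalIntegrable_Dm hm h₁.1 h₁₂.le h₂.2.le)
      (fun w hw => Dm_pos hm (h₁.1.trans hw.1) (hw.2.trans h₂.2)) h₁₂
  rw [Km_eq_intervalIntegral h₁.1.le h₁.2.le, Km_eq_intervalIntegral h₂.1.le h₂.2.le,
    ← intervalIntegral.integral_add_adjacent_intervals
      (intervalIntegrable_Dm hm h₁.1 h₁₂.le h₂.2.le) (intervalIntegrable_Dm hm h₂.1 h₂.2.le le_rfl)]
  linarith

lemma stronglyMeasurable_Km : StronglyMeasurable (Km m) := by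
  simp_rw [funext (Km_eq (m := m))]
  exact stronglyMeasurable_setIntegral_Ioc (by fun_prop) measurable_Dm _

lemma Km_le_rpow (hm : -1 < m) {r : ℝ} (hr : r ≤ 0) (hrm : r < -m) :
    ∃ C, 0 ≤ C ∧ ∀ z : ℝ, 0 < ‖(z : UnitAddCircle)‖ →
      Km m z ≤ C * ‖(z : UnitAddCircle)‖ ^ r + 1/2 := by
  set q := -(m + 1) - r
  have hq : IntervalIntegrable (fun w : ℝ => w ^ q) volume 0 (1/2) :=
    intervalIntegral.intervalIntegrable_rpow' (by linarith)
  refine ⟨∫ w in (0 : ℝ)..1/2, w ^ q, intervalIntegral.integral_nonneg (by norm_num)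
    fun w hw => rpow_nonneg hw.1 _, fun z ha => ?_⟩
  have hq_nonneg : 0 ≤ᵐ[volume.restrict (Ioc 0 (1/2))] fun w : ℝ => w ^ q := by
    filter_upwards [ae_restrict_mem measurableSet_Ioc] with w hw using rpow_nonneg hw.1.le q
  set a := ‖(z : UnitAddCircle)‖
  have ha2 : a ≤ 1/2 := norm_unitAddCircle_le_half _
  have hqa : IntervalIntegrable (fun w : ℝ => w ^ q) volume a (1/2) :=
    hq.mono_set (by rw [uIcc_of_le ha2, uIcc_of_le (by norm_num)]; exact Icc_subset_Icc_left ha.le)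
  have hpoint : ∀ w ∈ Icc a (1/2), Dm m w ≤ a ^ r * w ^ q + 1 := fun w ⟨haw, hw⟩ => by
    have hw0 : 0 < w := ha.trans_le haw
    have hsplit : w ^ (-(m + 1)) = w ^ r * w ^ q := by rw [← rpow_add hw0, add_sub_cancel]
    have := mul_le_mul_of_nonneg_right (rpow_le_rpow_of_nonpos ha haw hr) (rpow_nonneg hw0.le q)
    linarith [Dm_le hm hw0.le hw]
  rw [Km_eq, ← intervalIntegral.integral_of_le ha2]
  calc ∫ w in a..1/2, Dm m w ≤ ∫ w in a..1/2, (a ^ r * w ^ q + 1) :=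
        intervalIntegral.integral_mono_on ha2 (intervalIntegrable_Dm hm ha ha2 le_rfl)
          ((hqa.const_mul _).add intervalIntegrable_const) hpoint
    _ = a ^ r * (∫ w in a..1/2, w ^ q) + (1/2 - a) := by
        rw [intervalIntegral.integral_add (hqa.const_mul _) intervalIntegrable_const,
          intervalIntegral.integral_const_mul, intervalIntegral.integral_const, smul_eq_mul,
          mul_one]
    _ ≤ a ^ r * (∫ w in (0 : ℝ)..1/2, w ^ q) + 1/2 := by
        gcongr ?_ + ?_
        · exact mul_le_mul_of_nonneg_left (intervalIntegral.integral_mono_interval ha.le ha2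
            le_rfl hq_nonneg hq) (rpow_nonneg ha.le _)
        · linarith
    _ = (∫ w in (0 : ℝ)..1/2, w ^ q) * a ^ r + 1/2 := by ring

theorem memLp_Km (hm : -1 < m) {q : ℝ≥0} (hq : q ≠ 0) (hmq : m * q < 1) :
    MemLp (Km m) q (volume.restrict Omega) := by
  have hq0 : (0 : ℝ) < q := by positivity
  obtain ⟨r, hr0, hrm, hrq⟩ : ∃ r : ℝ, r ≤ 0 ∧ r < -m ∧ -1 / (q : ℝ) < r := by
    have h0 : -1 / (q : ℝ) < 0 := div_neg_of_neg_of_pos (by norm_num) hq0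
    have h1 : -1 / (q : ℝ) < -m := by
      rw [neg_div, neg_lt_neg_iff, lt_div_iff₀ hq0]; exact hmq
    exact ⟨(min 0 (-m) + -1 / q) / 2, by linarith [min_le_left 0 (-m)],
      by linarith [min_le_right 0 (-m)], by linarith [lt_min h0 h1]⟩
  obtain ⟨C, hC, hK⟩ := Km_le_rpow hm hr0 hrm
  refine (((memLp_abs_rpow_Omega hq ((div_lt_iff₀ hq0).1 hrq)).const_mul C).add
    (memLp_const (1/2 : ℝ))).mono stronglyMeasurable_Km.aestronglyMeasurable ?_
  filter_upwards [ae_restrict_mem measurableSet_Icc, ae_restrict_of_ae (volume.ae_ne 0)]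
    with z hzΩ hz
  have hnorm : ‖(z : UnitAddCircle)‖ = |z| := norm_coe_unitAddCircle_of_abs_le (abs_le.2 hzΩ)
  have hbound := hK z (by rw [hnorm]; exact abs_pos.2 hz)
  rw [hnorm] at hbound
  simp only [Real.norm_eq_abs, Pi.add_apply]
  rw [abs_of_nonneg (Km_nonneg hm z), abs_of_nonneg (by positivity)]
  exact hbound

end Potential

theorem stmt_6 (m : ℝ) (hm : -1 < m) (hm' : m < 1) :
    (∀ w ∈ Set.Ioo (0 : ℝ) 1,
      Summable (fun k : ℕ =>
        |((k : ℝ) + w) ^ (-(m + 1)) - ((k : ℝ) + 1 - w) ^ (-(m + 1))|)) ∧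
    (∀ w ∈ Set.Ioo (0 : ℝ) (1/2), 0 < Dm m w) ∧
    (∀ z : ℝ, 0 ≤ Km m z) ∧
    (∀ z : ℝ, Km m (-z) = Km m z) ∧
    (∀ z : ℝ, Km m (z + 1) = Km m z) ∧
    StrictAntiOn (Km m) (Set.Ioo (0 : ℝ) (1/2)) ∧
    (∀ z ∈ Set.Ioo (0 : ℝ) 1, Km m z = Km m (1 - z)) ∧
    IntegrableOn (Km m) Omega ∧
    (m ≤ 0 → MemLp (Km m) 2 (volume.restrict Omega)) := by
  refine ⟨fun w hw => summable_abs_dmTerm (by linarith) (Ioo_subset_Icc_self hw),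
    fun w hw => Dm_pos hm hw.1 hw.2, Km_nonneg hm, Km_neg, Km_add_one, strictAntiOn_Km hm,
    fun z _ => (Km_one_sub z).symm, ?_, fun hm0 => ?_⟩
  · exact memLp_one_iff_integrable.1 (by simpa using memLp_Km hm one_ne_zero (by simpa using hm'))
  · simpa using memLp_Km hm (q := 2) two_ne_zero (by push_cast; linarith)
end
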